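/- The diagram relating Connes' differential B : HH_n(A) → HH_{n+1}(A) and the dual map B̄* : H^n(A,A*)* → H^{n+1}(A,A*)* via φ commutes: φ ∘ B = B̄* ∘ φ. -/

import Mathlib

open scoped TensorProduct
open PiTensorProduct

section Chains

variable (k : Type) [CommRing k] (A : Type) [Ring A] [Algebra k A]

/-- The `n`-fold tensor power of `A` over `k`. -/
noncomputable abbrev Tpow (n : ℕ) : Type _ := ⨂[k] (_ : Fin n), A

/-- Splitting off the first tensor factor. -/
noncomputable def splitT (n : ℕ) : Tpow k A (n+1) ≃ₗ[k] A ⊗[k] Tpow k A n :=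
  ((PiTensorProduct.reindex k (fun _ : Fin (n+1) => A)
      ((finCongr (by omega : n + 1 = 1 + n)).trans finSumFinEquiv.symm)).trans
    (PiTensorProduct.tmulEquiv k A).symm).trans
    (TensorProduct.congr (PiTensorProduct.subsingletonEquiv (0 : Fin 1))
      (LinearEquiv.refl k (Tpow k A n)))

/-- Multiply the first two tensor factors. -/
noncomputable def mulHead (n : ℕ) : Tpow k A (n+2) →ₗ[k] Tpow k A (n+1) :=
  (splitT k A n).symm.toLinearMap ∘ₗ
    (LinearMap.rTensor (Tpow k A n) (LinearMap.mul' k A)) ∘ₗ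
    (TensorProduct.assoc k A A (Tpow k A n)).symm.toLinearMap ∘ₗ
    (LinearMap.lTensor A (splitT k A n).toLinearMap) ∘ₗ (splitT k A (n+1)).toLinearMap

/-- The `i+1`-st inner face map (multiplying factors `i+1` and `i+2`),
for `0 ≤ i ≤ n` a map `A^{⊗(n+2)} → A^{⊗(n+1)}`. -/
noncomputable def faceIn : (n i : ℕ) → (Tpow k A (n+2) →ₗ[k] Tpow k A (n+1))
  | n, 0 => mulHead k A n
  | 0, _+1 => 0
  | n+1, i+1 =>
      (splitT k A (n+1)).symm.toLinearMap ∘ₗ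
        (LinearMap.lTensor A (faceIn n i)) ∘ₗ (splitT k A (n+2)).toLinearMap

/-- Swap the first two tensor factors. -/
noncomputable def swapHead (n : ℕ) : Tpow k A (n+2) ≃ₗ[k] Tpow k A (n+2) :=
  ((splitT k A (n+1)).trans
    ((TensorProduct.congr (LinearEquiv.refl k A) (splitT k A n)).trans
      (((TensorProduct.assoc k A A (Tpow k A n)).symm.trans
        ((TensorProduct.congr (TensorProduct.comm k A A) (LinearEquiv.refl k (Tpow k A n))).trans
          (TensorProduct.assoc k A A (Tpow k A n)))).trans
        ((TensorProduct.congr (LinearEquiv.refl k A) (splitT k A n).symm).trans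
          (splitT k A (n+1)).symm)))) 

/-- The last (cyclic) face map `x ⊗ a₁ ⊗ ⋯ ⊗ a_{n+1} ↦ a_{n+1} x ⊗ a₁ ⊗ ⋯ ⊗ aₙ`. -/
noncomputable def lastFace : (n : ℕ) → (Tpow k A (n+2) →ₗ[k] Tpow k A (n+1))
  | 0 =>
      (splitT k A 0).symm.toLinearMap ∘ₗ
        (LinearMap.rTensor (Tpow k A 0)
          ((LinearMap.mul' k A) ∘ₗ (TensorProduct.comm k A A).toLinearMap)) ∘ₗ
        (TensorProduct.assoc k A A (Tpow k A 0)).symm.toLinearMap ∘ₗ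
        (LinearMap.lTensor A (splitT k A 0).toLinearMap) ∘ₗ (splitT k A 1).toLinearMap
  | n+1 =>
      (swapHead k A n).toLinearMap ∘ₗ
        (splitT k A (n+1)).symm.toLinearMap ∘ₗ
          (LinearMap.lTensor A (lastFace n)) ∘ₗ
            (splitT k A (n+2)).toLinearMap ∘ₗ (swapHead k A (n+1)).toLinearMap

/-- The module of Hochschild `n`-chains of `A`, namely `A ⊗ A^{⊗ n} = A^{⊗(n+1)}`. -/
noncomputable abbrev Chains (n : ℕ) : Type _ := Tpow k A (n+1)

/-- The Hochschild boundary `b : C_{n+1}(A) → C_n(A)`. -/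
noncomputable def bmap (n : ℕ) : Chains k A (n+1) →ₗ[k] Chains k A n :=
  (∑ i ∈ Finset.range (n+1), ((-1 : ℤ)^i) • faceIn k A n i) + ((-1 : ℤ)^(n+1)) • lastFace k A n

/-- The submodule of Hochschild cycles. -/
noncomputable def cycS : (n : ℕ) → Submodule k (Chains k A n)
  | 0 => ⊤
  | m+1 => LinearMap.ker (bmap k A m)

/-- The pairing of a Hochschild cochain `f ∈ Hom_k(A^{⊗ n}, A^*)` with a Hochschild
`n`-chain, `⟨x ⊗ a₁ ⊗ ⋯ ⊗ aₙ, f⟩ = f(a₁ ⊗ ⋯ ⊗ aₙ)(x)`. -/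
noncomputable def pairC (n : ℕ)
    (f : MultilinearMap k (fun _ : Fin n => A) (Module.Dual k A)) :
    Chains k A n →ₗ[k] k :=
  (TensorProduct.lift ((PiTensorProduct.lift f).flip)) ∘ₗ (splitT k A n).toLinearMap

end Chains

section Cochains

variable {k : Type} [CommRing k] {A : Type} [Ring A] [Algebra k A]
variable {W : Type} [AddCommGroup W] [Module k W]

/-- The tuple obtained from `a : Fin (n+1) → A` by multiplying entries `i` and `i+1`. -/
def mergeT {n : ℕ} (a : Fin (n+1) → A) (i : Fin n) : Fin n → A := fun j =>
  if (j : ℕ) < (i : ℕ) then a (Fin.castSucc j)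
  else if (j : ℕ) = (i : ℕ) then a (Fin.castSucc j) * a (Fin.succ j)
  else a (Fin.succ j)

/-- The standard Hochschild coboundary formula for a cochain with values in a
bimodule `W` whose left and right `A`-actions are `la` and `ra`. -/
def hdG (la : A → W → W) (ra : A → W → W) {n : ℕ}
    (f : (Fin n → A) → W) (a : Fin (n+1) → A) : W :=
  la (a 0) (f (Fin.tail a))
    + (∑ i : Fin n, ((-1 : ℤ)^((i : ℕ)+1)) • f (mergeT a i))
    + ((-1 : ℤ)^(n+1)) • ra (a (Fin.last n)) (f (Fin.init a))

/-- The left action of `A` on `A* = Hom_k(A,k)`: `(a·f)(x) = f(xa)`. -/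
noncomputable def laD (a : A) (f : Module.Dual k A) : Module.Dual k A :=
  f ∘ₗ LinearMap.mulRight k a

/-- The right action of `A` on `A* = Hom_k(A,k)`: `(f·b)(x) = f(bx)`. -/
noncomputable def raD (b : A) (f : Module.Dual k A) : Module.Dual k A :=
  f ∘ₗ LinearMap.mulLeft k b

/-- The Hochschild coboundary on cochains with values in `A*`, with the canonical
bimodule structure `(afb)(x) = f(bxa)`. -/
noncomputable def hdD {n : ℕ} (f : (Fin n → A) → Module.Dual k A)
    (a : Fin (n+1) → A) : Module.Dual k A :=
  hdG laD raD f a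

/-- Being a Hochschild coboundary, for cochains with values in a bimodule `W`
with actions `la`, `ra` (in degree `0` this means being zero). -/
def IsCoboundG (la : A → W → W) (ra : A → W → W) :
    (n : ℕ) → ((Fin n → A) → W) → Prop
  | 0, F => ∀ a, F a = 0
  | m+1, F => ∃ g : MultilinearMap k (fun _ : Fin m => A) W,
      ∀ a, F a = hdG la ra (⇑g) a

/-- Being a Hochschild coboundary for `A*`-valued cochains. -/
noncomputable def IsCoboundD : (n : ℕ) → ((Fin n → A) → Module.Dual k A) → Prop :=
  IsCoboundG (k := k) (A := A) (laD (k := k) (A := A)) (raD (k := k) (A := A))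

/-- The tuple `(a_i, …, aₙ, a₀, …, a_{i-1})` built from `a₀`-placeholder and `a`,
with the placeholder slot left as `1`. -/
noncomputable def cycTuple {n : ℕ} (a : Fin n → A) (i : Fin (n+1)) : Fin (n+1) → A :=
  fun j => if h : j + i = 0 then 1 else a ((j + i).pred h)

/-- The operator `B̄ : Hom(A^{⊗(n+1)}, A*) → Hom(A^{⊗ n}, A*)`,
`B̄(f)(a₁ ⊗ ⋯ ⊗ aₙ)(a₀) = ∑ (−1)^{ni} f(a_i ⊗ ⋯ ⊗ aₙ ⊗ a₀ ⊗ ⋯ ⊗ a_{i-1})(1)`. -/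
noncomputable def Bbar {n : ℕ}
    (f : MultilinearMap k (fun _ : Fin (n+1) => A) (Module.Dual k A))
    (a : Fin n → A) : Module.Dual k A :=
  ∑ i : Fin (n+1), ((-1 : ℤ)^(n * (i : ℕ))) •
    ((Module.Dual.eval k A (1 : A)) ∘ₗ (f.toLinearMap (cycTuple a i) (-i)))

end Cochains

section Connes

variable (k : Type) [CommRing k] (A : Type) [Ring A] [Algebra k A]

/-- Cyclic rotation of the tensor factors: `a₀ ⊗ ⋯ ⊗ aₙ ↦ a_i ⊗ ⋯ ⊗ aₙ ⊗ a₀ ⊗ ⋯ ⊗ a_{i-1}`. -/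
noncomputable def rotT (n : ℕ) (i : Fin (n+1)) : Tpow k A (n+1) ≃ₗ[k] Tpow k A (n+1) :=
  PiTensorProduct.reindex k (fun _ : Fin (n+1) => A) ((Equiv.addRight i).symm)

/-- Prepending a tensor factor `1`. -/
noncomputable def prependOne (n : ℕ) : Tpow k A n →ₗ[k] Tpow k A (n+1) :=
  (splitT k A n).symm.toLinearMap ∘ₗ (TensorProduct.mk k A (Tpow k A n) (1 : A))

/-- Connes' differential `B : C_n(A) → C_{n+1}(A)`,
`B(a₀ ⊗ ⋯ ⊗ aₙ) = Σ_{i=0}^{n} (−1)^{ni} 1 ⊗ a_i ⊗ ⋯ ⊗ aₙ ⊗ a₀ ⊗ ⋯ ⊗ a_{i-1}`. -/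
noncomputable def BchainMap (n : ℕ) : Chains k A n →ₗ[k] Chains k A (n+1) :=
  ∑ i ∈ Finset.range (n+1), ((-1 : ℤ)^(n * i)) •
    ((prependOne k A (n+1)) ∘ₗ (rotT k A n (Fin.ofNat (n+1) i)).toLinearMap)

end Connes

/-! Both sides are linear in `z`, so it suffices to compare them on an elementary tensor
`a₀ ⊗ ⋯ ⊗ aₙ`. There both equal `Σᵢ (−1)^{ni} f(a_i ⊗ ⋯ ⊗ a_{i−1})(1)`: on the left the `1`
prepended by `B` is the argument of `f(…) ∈ A*`; on the right `B̄` evaluates at `1` while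
the pairing puts `a₀` back into the slot of the rotated tuple that `B̄` leaves open. -/

section Pairing

variable (k : Type) [CommRing k] (A : Type) [Ring A] [Algebra k A]

lemma splitT_tprod (n : ℕ) (a : Fin (n+1) → A) :
    splitT k A n (tprod k a) = a 0 ⊗ₜ[k] tprod k (Fin.tail a) := by
  simp only [splitT, LinearEquiv.trans_apply, reindex_tprod]
  erw [tmulEquiv_symm_apply]
  simp only [TensorProduct.congr_tmul, LinearEquiv.refl_apply, subsingletonEquiv_apply_tprod]
  congr 2
  funext j
  congr 1
  simp [finSumFinEquiv]

lemma prependOne_tprod (n : ℕ) (a : Fin n → A) :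
    prependOne k A n (tprod k a) = tprod k (Fin.cons (1 : A) a : Fin (n+1) → A) := by
  rw [prependOne, LinearMap.comp_apply, TensorProduct.mk_apply, LinearEquiv.coe_coe,
    LinearEquiv.symm_apply_eq, splitT_tprod, Fin.cons_zero, Fin.tail_cons]

lemma rotT_tprod (n : ℕ) (i : Fin (n+1)) (a : Fin (n+1) → A) :
    rotT k A n i (tprod k a) = tprod k (fun j => a (j + i)) :=
  reindex_tprod _ a

lemma pairC_tprod (n : ℕ) (f : MultilinearMap k (fun _ : Fin n => A) (Module.Dual k A))
    (a : Fin (n+1) → A) :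
    pairC k A n f (tprod k a) = f (Fin.tail a) (a 0) := by
  simp [pairC, splitT_tprod]

lemma pairC_BchainMap_tprod (n : ℕ)
    (f : MultilinearMap k (fun _ : Fin (n+1) => A) (Module.Dual k A)) (a : Fin (n+1) → A) :
    pairC k A (n+1) f (BchainMap k A n (tprod k a)) =
      ∑ i : Fin (n+1), ((-1 : ℤ)^(n * (i : ℕ))) • f (fun j => a (j + i)) 1 := by
  have zsmul_apply (c : ℤ) (φ : Chains k A n →ₗ[k] Chains k A (n+1)) (x : Chains k A n) :
      (c • φ) x = c • φ x := rfl
  simp only [BchainMap, LinearMap.coe_sum, Finset.sum_apply, map_sum]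
  rw [← Fin.sum_univ_eq_sum_range]
  refine Finset.sum_congr rfl fun i _ => ?_
  rw [zsmul_apply, map_zsmul, LinearMap.comp_apply, LinearEquiv.coe_coe, Fin.ofNat_val_eq_self,
    rotT_tprod, prependOne_tprod, pairC_tprod, Fin.tail_cons, Fin.cons_zero]

end Pairing

lemma update_cycTuple_tail {A : Type} [Ring A] {n : ℕ} (a : Fin (n+1) → A) (i : Fin (n+1)) :
    Function.update (cycTuple (Fin.tail a) i) (-i) (a 0) = fun j => a (j + i) := by
  funext j
  rcases eq_or_ne j (-i) with rfl | hj
  · rw [Function.update_self, neg_add_cancel]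
  · have hji : j + i ≠ 0 := fun h => hj (eq_neg_of_add_eq_zero_left h)
    rw [Function.update_of_ne hj, cycTuple, dif_neg hji, Fin.tail, Fin.succ_pred]

lemma Bbar_tail_apply_head {k : Type} [CommRing k] {A : Type} [Ring A] [Algebra k A] {n : ℕ}
    (f : MultilinearMap k (fun _ : Fin (n+1) => A) (Module.Dual k A)) (a : Fin (n+1) → A) :
    Bbar f (Fin.tail a) (a 0) =
      ∑ i : Fin (n+1), ((-1 : ℤ)^(n * (i : ℕ))) • f (fun j => a (j + i)) 1 := by
  simp only [Bbar, LinearMap.coe_sum, Finset.sum_apply]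
  refine Finset.sum_congr rfl fun i _ => ?_
  rw [LinearMap.smul_apply, LinearMap.comp_apply, MultilinearMap.toLinearMap_apply,
    update_cycTuple_tail, Module.Dual.eval_apply]

theorem statement4_general (k : Type) [CommRing k] (A : Type) [Ring A] [Algebra k A] (n : ℕ)
    (z : Chains k A n)
    (f : MultilinearMap k (fun _ : Fin (n+1) => A) (Module.Dual k A))
    (g : MultilinearMap k (fun _ : Fin n => A) (Module.Dual k A))
    (hg : ∀ a, ⇑g a = Bbar f a) :
    pairC k A (n+1) f (BchainMap k A n z) = pairC k A n g z := by
  suffices pairC k A (n+1) f ∘ₗ BchainMap k A n = pairC k A n g from LinearMap.congr_fun this z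
  refine PiTensorProduct.ext (MultilinearMap.ext fun a => ?_)
  rw [LinearMap.compMultilinearMap_apply, LinearMap.compMultilinearMap_apply, LinearMap.comp_apply,
    pairC_BchainMap_tprod, pairC_tprod, hg, Bbar_tail_apply_head]

/-- The diagram relating Connes' differential
`B : HH_n(A) → HH_{n+1}(A)` and the dual `B̄* : H^n(A,A*)* → H^{n+1}(A,A*)*` via the
pairing `φ` commutes, `φ ∘ B = B̄* ∘ φ`: for every Hochschild cycle `z`, every cocycle
`f` of degree `n+1` and every cochain `g` representing `B̄ f`,
`φ(B[z])([f]) = ⟨B z, f⟩ = ⟨z, B̄ f⟩ = (B̄* φ([z]))([f])`. -/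
theorem statement4 (k : Type) [CommRing k] (A : Type) [Ring A] [Algebra k A] (n : ℕ)
    (z : Chains k A n) (hz : z ∈ cycS k A n)
    (f : MultilinearMap k (fun _ : Fin (n+1) => A) (Module.Dual k A))
    (hf : ∀ a, hdD (⇑f) a = 0)
    (g : MultilinearMap k (fun _ : Fin n => A) (Module.Dual k A))
    (hg : ∀ a, ⇑g a = Bbar f a) :
    pairC k A (n+1) f (BchainMap k A n z) = pairC k A n g z :=
  statement4_general k A n z f g hg
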